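/- arXiv:2002.08556 — 3 statements merged into one kernel-verified Lean document; each statement's English description precedes it below -/
import Mathlib

section
/- Let A be an invertible real matrix with singular values in [σ, Σ] (0 < σ ≤ Σ) whose stage blocks satisfy the bidiagonal sparsity A_{i,j} = 0 unless 0 ≤ i−j ≤ 1 (for stage indices i,j ∈ {1,…,N}). Then the stage blocks of the inverse satisfy ‖(A⁻¹)_{i,j}‖ ≤ (Σ/σ²) · ρ^{max(|i−j|−1,0)}, where ρ := (Σ²−σ²)/(Σ²+σ²). -/
/-!
Put `c = 2 / (Σ² + σ²)` and `M = 1 - c AᵀA`. The bounds `σ² ≤ AᵀA ≤ Σ²` give `‖M‖ ≤ ρ`, and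
`A⁻¹ = c ∑_{k<K} Mᵏ Aᵀ + Mᴷ A⁻¹` for every `K`. As `A` is block lower bidiagonal, `AᵀA` and
hence `M` are block tridiagonal, so `Mᵏ Aᵀ` only has blocks `(i, j)` with `-(k + 1) ≤ i - j ≤ k`:
the first `|i - j| - 1` terms do not reach block `(i, j)`. Bounding the others by `c Σ ρᵏ` and
letting `K → ∞` leaves `c Σ ρ^(|i-j|-1) / (1 - ρ) = (Σ / σ²) ρ^(|i-j|-1)`.
-/

open Matrix

/-- Induced ℓ²-operator norm of a real matrix. -/
noncomputable def opNorm {α β : Type*} [Fintype α] [Fintype β] [DecidableEq β]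
    (M : Matrix α β ℝ) : ℝ :=
  ‖LinearMap.toContinuousLinearMap (Matrix.toEuclideanLin M)‖

open Finset
open scoped Matrix.Norms.L2Operator MatrixOrder RealInnerProductSpace

lemma eq_geom_sum_mul_add_of_mul_eq_one {R : Type*} [Ring R] {a a' : R} (h : a * a' = 1) (b : R)
    (K : ℕ) : a' = (∑ k ∈ range K, (1 - b * a) ^ k) * b + (1 - b * a) ^ K * a' := by
  have hgeom : (∑ k ∈ range K, (1 - b * a) ^ k) * (b * a) = 1 - (1 - b * a) ^ K := by
    simpa using geom_sum_mul_neg (1 - b * a) K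
  calc a' = (1 - (1 - b * a) ^ K) * a' + (1 - b * a) ^ K * a' := by noncomm_ring
    _ = _ := by rw [← hgeom, mul_assoc, mul_assoc, h, mul_one]

lemma norm_le_of_forall_eq_sum_add {E : Type*} [SeminormedAddCommGroup E] {x : E} {y z : ℕ → E}
    {C D ρ : ℝ} {m : ℕ} (hρ₀ : 0 ≤ ρ) (hρ₁ : ρ < 1) (hx : ∀ K, x = ∑ k ∈ range K, y k + z K)
    (hy₀ : ∀ k < m, y k = 0) (hy : ∀ k, ‖y k‖ ≤ C * ρ ^ k) (hz : ∀ K, ‖z K‖ ≤ D * ρ ^ K) :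
    ‖x‖ ≤ C * ρ ^ m / (1 - ρ) := by
  have hC : 0 ≤ C := by simpa using (norm_nonneg _).trans (hy 0)
  have hK : ∀ K, ‖x‖ ≤ C * ρ ^ m / (1 - ρ) + D * ρ ^ K := by
    intro K
    have htail : ∑ k ∈ range K, ‖y k‖ = ∑ k ∈ Ico m K, ‖y k‖ := by
      refine (sum_subset (fun k hk => ?_) fun k _ hk => ?_).symm
      · simp only [mem_Ico, mem_range] at hk ⊢; exact hk.2
      · rw [hy₀ k (by simp_all [mem_Ico]), norm_zero]
    calc ‖x‖ ≤ ∑ k ∈ range K, ‖y k‖ + ‖z K‖ := by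
          rw [hx K]; exact (norm_add_le _ _).trans (by gcongr; exact norm_sum_le _ _)
      _ ≤ ∑ k ∈ Ico m K, C * ρ ^ k + D * ρ ^ K := by
          rw [htail]; gcongr with k; exacts [hy k, hz K]
      _ ≤ C * ρ ^ m / (1 - ρ) + D * ρ ^ K := by
          rw [← mul_sum, mul_div_assoc]; gcongr; exact geom_sum_Ico_le_of_lt_one hρ₀ hρ₁
  have hlim : Filter.Tendsto (fun K : ℕ => C * ρ ^ m / (1 - ρ) + D * ρ ^ K) Filter.atTop
      (nhds (C * ρ ^ m / (1 - ρ))) := by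
    simpa using tendsto_const_nhds.add ((tendsto_pow_atTop_nhds_zero_of_lt_one hρ₀ hρ₁).const_mul D)
  exact ge_of_tendsto' hlim hK

namespace Matrix

section Banded

variable {ι R : Type*} {s : ι → ℤ} {lo hi lo' hi' : ℤ}

def IsBanded [Zero R] (s : ι → ℤ) (lo hi : ℤ) (B : Matrix ι ι R) : Prop :=
  ∀ p q, s p - s q ∉ Set.Icc lo hi → B p q = 0

lemma isBanded_one [DecidableEq ι] [Zero R] [One R] : IsBanded s 0 0 (1 : Matrix ι ι R) :=
  fun _ _ hpq => one_apply_ne fun h => hpq (by simp [h])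

lemma IsBanded.mono [Zero R] {B : Matrix ι ι R} (hB : IsBanded s lo hi B) (hlo : lo' ≤ lo)
    (hhi : hi ≤ hi') : IsBanded s lo' hi' B :=
  fun p q hpq => hB p q fun h => hpq ⟨hlo.trans h.1, h.2.trans hhi⟩

lemma IsBanded.transpose [Zero R] {B : Matrix ι ι R} (hB : IsBanded s lo hi B) :
    IsBanded s (-hi) (-lo) Bᵀ :=
  fun p q hpq => hB q p fun h => hpq ⟨by linarith [h.2], by linarith [h.1]⟩

lemma IsBanded.smul [Zero R] [SMulZeroClass R R] {B : Matrix ι ι R} (hB : IsBanded s lo hi B)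
    (c : R) : IsBanded s lo hi (c • B) :=
  fun p q hpq => by rw [smul_apply, hB p q hpq, smul_zero]

lemma IsBanded.sub [AddGroup R] {B C : Matrix ι ι R} (hB : IsBanded s lo hi B)
    (hC : IsBanded s lo hi C) : IsBanded s lo hi (B - C) :=
  fun p q hpq => by rw [sub_apply, hB p q hpq, hC p q hpq, sub_zero]

lemma IsBanded.mul [Fintype ι] [NonUnitalNonAssocSemiring R] {B C : Matrix ι ι R}
    (hB : IsBanded s lo hi B) (hC : IsBanded s lo' hi' C) :
    IsBanded s (lo + lo') (hi + hi') (B * C) := by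
  intro p q hpq
  rw [mul_apply]
  refine sum_eq_zero fun r _ => ?_
  by_cases hpr : s p - s r ∈ Set.Icc lo hi
  · rw [hC r q fun hrq => hpq ⟨by linarith [hpr.1, hrq.1], by linarith [hpr.2, hrq.2]⟩, mul_zero]
  · rw [hB p r hpr, zero_mul]

lemma IsBanded.pow [Fintype ι] [DecidableEq ι] [Semiring R] {B : Matrix ι ι R}
    (hB : IsBanded s lo hi B) (k : ℕ) : IsBanded s (k * lo) (k * hi) (B ^ k) := by
  induction k with
  | zero => simpa using isBanded_one
  | succ k ih => simpa [pow_succ, add_mul] using ih.mul hB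

end Banded

section L2OpNorm

variable {𝕜 : Type*} [RCLike 𝕜] {l m n o : Type*} [Fintype l] [Fintype m] [Fintype n] [Fintype o]
  [DecidableEq l] [DecidableEq m] [DecidableEq n] [DecidableEq o]

lemma l2_opNorm_one_le : ‖(1 : Matrix n n 𝕜)‖ ≤ 1 := by
  rw [cstar_norm_def, map_one]
  exact ContinuousLinearMap.norm_id_le

lemma l2_opNorm_pow_le (M : Matrix n n 𝕜) (k : ℕ) : ‖M ^ k‖ ≤ ‖M‖ ^ k := by
  rcases k.eq_zero_or_pos with rfl | hk
  · simpa using l2_opNorm_one_le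
  · exact norm_pow_le' M hk

lemma l2_opNorm_one_submatrix_le {f : m → n} (hf : Function.Injective f) :
    ‖(1 : Matrix n n 𝕜).submatrix f id‖ ≤ 1 := by
  set P := (1 : Matrix n n 𝕜).submatrix f id
  have hP : Pᴴᴴ * Pᴴ = 1 := by
    rw [conjTranspose_conjTranspose, conjTranspose_submatrix, conjTranspose_one,
      ← submatrix_mul _ _ _ _ _ Function.bijective_id, Matrix.one_mul, submatrix_one _ hf]
  have h := l2_opNorm_conjTranspose_mul_self Pᴴ
  rw [hP, l2_opNorm_conjTranspose] at h
  nlinarith [l2_opNorm_one_le (n := m) (𝕜 := 𝕜), norm_nonneg P]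

lemma l2_opNorm_submatrix_le (M : Matrix m n 𝕜) {f : l → m} {g : o → n}
    (hf : Function.Injective f) (hg : Function.Injective g) : ‖M.submatrix f g‖ ≤ ‖M‖ := by
  have h : M.submatrix f g =
      (1 : Matrix m m 𝕜).submatrix f id * M * ((1 : Matrix n n 𝕜).submatrix g id)ᴴ := by
    ext a b
    simp [mul_apply, one_apply]
  rw [h]
  calc _ ≤ ‖(1 : Matrix m m 𝕜).submatrix f id‖ * ‖M‖ * ‖((1 : Matrix n n 𝕜).submatrix g id)ᴴ‖ :=
        (l2_opNorm_mul _ _).trans (by gcongr; exact l2_opNorm_mul _ _)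
    _ ≤ 1 * ‖M‖ * 1 := by
        rw [l2_opNorm_conjTranspose]
        gcongr
        exacts [l2_opNorm_one_submatrix_le hf, l2_opNorm_one_submatrix_le hg]
    _ = ‖M‖ := by ring

lemma IsHermitian.l2_opNorm_le_of_neg_le_of_le {M : Matrix n n ℝ} (hM : M.IsHermitian) {r : ℝ}
    (hr : 0 ≤ r) (h₁ : -(r • 1) ≤ M) (h₂ : M ≤ r • 1) : ‖M‖ ≤ r := by
  have hT : (toEuclideanCLM (𝕜 := ℝ) M : EuclideanSpace ℝ n →ₗ[ℝ] EuclideanSpace ℝ n).IsSymmetric :=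
    isSymmetric_toEuclideanLin_iff.mpr hM
  have hquad : ∀ x : EuclideanSpace ℝ n, |⟪x, toEuclideanCLM (𝕜 := ℝ) M x⟫| ≤ r * ‖x‖ ^ 2 := by
    intro x
    have hx : ‖x‖ ^ 2 = x.ofLp ⬝ᵥ x.ofLp := by
      rw [← real_inner_self_eq_norm_sq, EuclideanSpace.inner_eq_star_dotProduct]; simp
    have hlo := (le_iff.mp h₁).dotProduct_mulVec_nonneg x.ofLp
    have hhi := (le_iff.mp h₂).dotProduct_mulVec_nonneg x.ofLp
    simp only [star_trivial, sub_neg_eq_add, add_mulVec, sub_mulVec, smul_mulVec, one_mulVec,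
      dotProduct_add, dotProduct_sub, dotProduct_smul, smul_eq_mul] at hlo hhi
    rw [inner_toEuclideanCLM, hx, abs_le]
    constructor <;> linarith
  rw [cstar_norm_def, ContinuousLinearMap.norm_eq_iSup_rayleighQuotient _ hT]
  refine ciSup_le fun x => ?_
  rcases eq_or_ne x 0 with rfl | hx
  · simpa using hr
  rw [ContinuousLinearMap.rayleighQuotient, ContinuousLinearMap.reApplyInnerSelf_apply, abs_div,
    abs_sq, div_le_iff₀ (by positivity)]
  simpa [real_inner_comm] using hquad x

lemma l2_opNorm_le_of_transpose_mul_self_le {p : Type*} [Fintype p] {A : Matrix p n ℝ} {r : ℝ}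
    (hr : 0 ≤ r) (h : Aᵀ * A ≤ r ^ 2 • 1) : ‖A‖ ≤ r := by
  have hAA : (Aᵀ * A).PosSemidef := by
    simpa using posSemidef_conjTranspose_mul_self A
  have hlo : -(r ^ 2 • 1) ≤ Aᵀ * A := by
    rw [le_iff, sub_neg_eq_add]
    exact hAA.add (PosSemidef.one.smul (sq_nonneg r))
  have hnorm := hAA.isHermitian.l2_opNorm_le_of_neg_le_of_le (sq_nonneg r) hlo h
  rw [← conjTranspose_eq_transpose_of_trivial, l2_opNorm_conjTranspose_mul_self, ← sq] at hnorm
  exact (pow_le_pow_iff_left₀ (norm_nonneg A) hr two_ne_zero).mp hnorm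

lemma l2_opNorm_one_sub_smul_le {S : Matrix n n ℝ} (hS : S.IsHermitian) {a b : ℝ} (ha : 0 < a)
    (hab : a ≤ b) (hlo : a • 1 ≤ S) (hhi : S ≤ b • 1) :
    ‖1 - (2 / (b + a)) • S‖ ≤ (b - a) / (b + a) := by
  have hba : 0 < b + a := by linarith
  have hc : 0 ≤ 2 / (b + a) := by positivity
  have hc_lo : 1 - (b - a) / (b + a) = 2 / (b + a) * a := by field_simp; ring
  have hc_hi : 1 + (b - a) / (b + a) = 2 / (b + a) * b := by field_simp; ring
  refine (isHermitian_one.sub (hS.smul (IsSelfAdjoint.all _))).l2_opNorm_le_of_neg_le_of_le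
    (div_nonneg (sub_nonneg.mpr hab) hba.le) ?_ ?_ <;> rw [le_iff]
  · convert (le_iff.mp hhi).smul hc using 1
    linear_combination (norm := module) hc_hi • (1 : Matrix n n ℝ)
  · convert (le_iff.mp hlo).smul hc using 1
    linear_combination (norm := module) (-hc_lo) • (1 : Matrix n n ℝ)

lemma l2_opNorm_submatrix_inv_le {s : n → ℤ} {A B : Matrix n n 𝕜} (hA : IsUnit A) {ρ : ℝ}
    (hρ₀ : 0 ≤ ρ) (hρ₁ : ρ < 1) (hM : ‖1 - B * A‖ ≤ ρ) (hMband : IsBanded s (-1) 1 (1 - B * A))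
    (hB : IsBanded s (-1) 0 B) {f : l → n} {g : o → n} (hf : Function.Injective f)
    (hg : Function.Injective g) {d : ℤ} (hd : ∀ a b, s (f a) - s (g b) = d) :
    ‖A⁻¹.submatrix f g‖ ≤ ‖B‖ * ρ ^ (d.natAbs - 1) / (1 - ρ) := by
  have hAA : A * A⁻¹ = 1 := mul_nonsing_inv A ((isUnit_iff_isUnit_det A).mp hA)
  have hMpow : ∀ k, ‖(1 - B * A) ^ k‖ ≤ ρ ^ k := fun k =>
    (l2_opNorm_pow_le _ k).trans (pow_le_pow_left₀ (norm_nonneg _) hM k)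
  refine norm_le_of_forall_eq_sum_add (y := fun k => ((1 - B * A) ^ k * B).submatrix f g)
    (z := fun K => ((1 - B * A) ^ K * A⁻¹).submatrix f g) (D := ‖A⁻¹‖) hρ₀ hρ₁ (fun K => ?_)
    (fun k hk => ?_) (fun k => ?_) (fun K => ?_)
  · conv_lhs => rw [eq_geom_sum_mul_add_of_mul_eq_one hAA B K]
    ext a b
    simp only [sum_mul, submatrix_apply, Matrix.add_apply, Matrix.sum_apply]
  · ext a b
    exact ((hMband.pow k).mul hB) _ _ (by rw [hd, Set.mem_Icc]; omega)
  · calc _ ≤ ‖(1 - B * A) ^ k‖ * ‖B‖ := (l2_opNorm_submatrix_le _ hf hg).trans (l2_opNorm_mul _ _)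
      _ ≤ ‖B‖ * ρ ^ k := by rw [mul_comm]; gcongr; exact hMpow k
  · calc _ ≤ ‖(1 - B * A) ^ K‖ * ‖A⁻¹‖ := (l2_opNorm_submatrix_le _ hf hg).trans (l2_opNorm_mul _ _)
      _ ≤ ‖A⁻¹‖ * ρ ^ K := by rw [mul_comm]; gcongr; exact hMpow K

end L2OpNorm

end Matrix

theorem stmt_6 {N n : ℕ} (A : Matrix (Fin N × Fin n) (Fin N × Fin n) ℝ) (sig Sig : ℝ)
    (hinv : IsUnit A) (hsig : 0 < sig) (hle : sig ≤ Sig)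
    (hlo : (Aᵀ * A - sig ^ 2 • (1 : Matrix (Fin N × Fin n) (Fin N × Fin n) ℝ)).PosSemidef)
    (hhi : (Sig ^ 2 • (1 : Matrix (Fin N × Fin n) (Fin N × Fin n) ℝ) - Aᵀ * A).PosSemidef)
    (hband : ∀ (i j : Fin N) (a b : Fin n),
      ¬(0 ≤ (i : ℤ) - (j : ℤ) ∧ (i : ℤ) - (j : ℤ) ≤ 1) → A (i, a) (j, b) = 0) :
    ∀ i j : Fin N,
      opNorm (Matrix.of fun (a b : Fin n) => A⁻¹ (i, a) (j, b)) ≤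
        (Sig / sig ^ 2) *
          ((Sig ^ 2 - sig ^ 2) / (Sig ^ 2 + sig ^ 2)) ^ (((i : ℤ) - (j : ℤ)).natAbs - 1) := by
  intro i j
  set ρ := (Sig ^ 2 - sig ^ 2) / (Sig ^ 2 + sig ^ 2) with hρ
  set c := 2 / (Sig ^ 2 + sig ^ 2) with hc
  have hsq : sig ^ 2 ≤ Sig ^ 2 := by gcongr
  have hρ₀ : 0 ≤ ρ := div_nonneg (sub_nonneg.mpr hsq) (by positivity)
  have hρ₁ : ρ < 1 := by rw [div_lt_one (by positivity)]; linarith [pow_pos hsig 2]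
  have hM : ‖1 - (c • Aᵀ) * A‖ ≤ ρ := by
    rw [smul_mul_assoc]
    exact l2_opNorm_one_sub_smul_le (by simpa using isHermitian_conjTranspose_mul_self A)
      (by positivity) hsq hlo hhi
  have hB : ‖c • Aᵀ‖ ≤ c * Sig := by
    rw [norm_smul, Real.norm_of_nonneg (by positivity), ← conjTranspose_eq_transpose_of_trivial,
      l2_opNorm_conjTranspose]
    gcongr
    exact l2_opNorm_le_of_transpose_mul_self_le (hsig.le.trans hle) hhi
  have hA : IsBanded (fun p : Fin N × Fin n => (p.1 : ℤ)) 0 1 A :=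
    fun p q hpq => hband p.1 q.1 p.2 q.2 hpq
  have hMband : IsBanded (fun p : Fin N × Fin n => (p.1 : ℤ)) (-1) 1 (1 - (c • Aᵀ) * A) :=
    (isBanded_one.mono (by norm_num) (by norm_num)).sub
      (((hA.transpose.smul c).mul hA).mono (by norm_num) (by norm_num))
  calc _ ≤ ‖c • Aᵀ‖ * ρ ^ (((i : ℤ) - (j : ℤ)).natAbs - 1) / (1 - ρ) :=
        l2_opNorm_submatrix_inv_le hinv hρ₀ hρ₁ hM hMband (hA.transpose.smul c)
          (Prod.mk_right_injective i) (Prod.mk_right_injective j) fun _ _ => rfl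
    _ ≤ c * Sig * ρ ^ (((i : ℤ) - (j : ℤ)).natAbs - 1) / (1 - ρ) := by gcongr
    _ = _ := by rw [hc, hρ]; field_simp; ring
end

section
/- Let A be an invertible block matrix with stage blocks A_{i,j} = 0 unless 0 ≤ i−j ≤ 1, singular values in [σ, Σ] with σ > 0, and define the basic-solution map z(d) := A⁻¹ d with stage components z_i(d) ∈ ℝⁿ and data stages d_j ∈ ℝⁿ. Then for any two data vectors d, d′, ‖z_i(d) − z_i(d′)‖ ≤ Σ_{j=1}^{N} (Σ/σ²) ρ^{max(|i−j|−1,0)} ‖d_j − d′_j‖, where ρ = (Σ²−σ²)/(Σ²+σ²). -/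
open Matrix

/-- Euclidean (ℓ²) norm of a finite real vector. -/
noncomputable def vecEnorm {α : Type*} [Fintype α] (v : α → ℝ) : ℝ :=
  ‖(WithLp.equiv 2 (α → ℝ)).symm v‖

/-!
Stage `j` of the data enters `A⁻¹ d` through `y = A⁻¹ δ`, where `δ` is the stage-`j` part of `d`,
and `y` solves the normal equations `AᵀA y = Aᵀ δ`. As `A` is block lower bidiagonal, `AᵀA` is
block tridiagonal and `Aᵀ δ` lives on stages `j - 1, j`, so the `t`-th Richardson iterate
`y_{t+1} = y_t + ω (Aᵀ δ - AᵀA y_t)` vanishes on stages more than `t` away from `j`. For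
`ω = 2 / (σ² + Σ²)` and `σ² ≤ AᵀA ≤ Σ²` the symmetric iteration matrix `1 - ω AᵀA` has quadratic
form between `-ρ` and `ρ`, so the error contracts by `ρ` per step. With `t = |i - j| - 1` this
gives `‖y_i‖ ≤ ρ^t ‖y‖ ≤ ρ^t ‖δ‖ / σ ≤ (Σ / σ²) ρ^t ‖δ‖`, and summing over `j` gives the bound.
-/

section vecEnorm

variable {α β : Type*} [Fintype α] [Fintype β]

lemma vecEnorm_nonneg (v : α → ℝ) : 0 ≤ vecEnorm v := norm_nonneg _

lemma vecEnorm_sq (v : α → ℝ) : vecEnorm v ^ 2 = v ⬝ᵥ v := by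
  rw [vecEnorm, EuclideanSpace.norm_eq, Real.sq_sqrt (by positivity)]
  simp [dotProduct, sq]

lemma vecEnorm_le_mul_of_dotProduct_le {u v : α → ℝ} {c : ℝ} (hc : 0 ≤ c)
    (h : u ⬝ᵥ u ≤ c ^ 2 * (v ⬝ᵥ v)) : vecEnorm u ≤ c * vecEnorm v := by
  rw [← pow_le_pow_iff_left₀ (vecEnorm_nonneg u) (by positivity [vecEnorm_nonneg v]) two_ne_zero,
    mul_pow, vecEnorm_sq, vecEnorm_sq]
  exact h

lemma vecEnorm_sum_le {γ : Type*} (s : Finset γ) (f : γ → α → ℝ) :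
    vecEnorm (∑ j ∈ s, f j) ≤ ∑ j ∈ s, vecEnorm (f j) := by
  have h := norm_sum_le s fun j => (WithLp.linearEquiv 2 ℝ (α → ℝ)).symm (f j)
  rwa [← map_sum] at h

lemma vecEnorm_stage_le (v : α × β → ℝ) (i : α) :
    vecEnorm (fun b => v (i, b)) ≤ vecEnorm v := by
  rw [← pow_le_pow_iff_left₀ (vecEnorm_nonneg _) (vecEnorm_nonneg v) two_ne_zero,
    vecEnorm_sq, vecEnorm_sq, dotProduct, dotProduct, Fintype.sum_prod_type]
  exact Finset.single_le_sum (f := fun k => ∑ b, v (k, b) * v (k, b))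
    (fun k _ => Finset.sum_nonneg fun b _ => mul_self_nonneg _) (Finset.mem_univ i)

end vecEnorm

section QuadraticForm

variable {ι : Type*} [Fintype ι]

lemma dotProduct_self_nonneg' (v : ι → ℝ) : 0 ≤ v ⬝ᵥ v := by
  simpa using dotProduct_self_star_nonneg v

lemma dotProduct_transpose_mul_self_mulVec (A : Matrix ι ι ℝ) (x : ι → ℝ) :
    x ⬝ᵥ (Aᵀ * A) *ᵥ x = (A *ᵥ x) ⬝ᵥ (A *ᵥ x) := by
  rw [← mulVec_mulVec, dotProduct_mulVec, vecMul_transpose]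

variable [DecidableEq ι]

lemma le_dotProduct_mulVec_of_posSemidef_sub_smul_one {H : Matrix ι ι ℝ} {s : ℝ}
    (h : (H - s • (1 : Matrix ι ι ℝ)).PosSemidef) (x : ι → ℝ) :
    s * (x ⬝ᵥ x) ≤ x ⬝ᵥ H *ᵥ x := by
  have := h.dotProduct_mulVec_nonneg x
  simp only [star_trivial, sub_mulVec, dotProduct_sub, smul_mulVec, one_mulVec, dotProduct_smul,
    smul_eq_mul] at this
  linarith

lemma dotProduct_mulVec_le_of_posSemidef_smul_one_sub {H : Matrix ι ι ℝ} {S : ℝ}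
    (h : (S • (1 : Matrix ι ι ℝ) - H).PosSemidef) (x : ι → ℝ) :
    x ⬝ᵥ H *ᵥ x ≤ S * (x ⬝ᵥ x) := by
  have := h.dotProduct_mulVec_nonneg x
  simp only [star_trivial, sub_mulVec, dotProduct_sub, smul_mulVec, one_mulVec, dotProduct_smul,
    smul_eq_mul] at this
  linarith

end QuadraticForm

section Contraction

variable {ι : Type*} [Fintype ι]

/-- Polarize `x ⬝ M x` along `t • M v ± v` and take the discriminant in `t`. -/
lemma Matrix.IsSymm.dotProduct_mulVec_self_le {M : Matrix ι ι ℝ} (hM : M.IsSymm) {ρ : ℝ}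
    (h : ∀ x, |x ⬝ᵥ M *ᵥ x| ≤ ρ * (x ⬝ᵥ x)) (v : ι → ℝ) :
    (M *ᵥ v) ⬝ᵥ (M *ᵥ v) ≤ ρ ^ 2 * (v ⬝ᵥ v) := by
  set u := M *ᵥ v
  have hvu : v ⬝ᵥ M *ᵥ u = u ⬝ᵥ u := by
    rw [dotProduct_mulVec, ← mulVec_transpose, hM.eq, dotProduct_comm]
  have hquad : ∀ t : ℝ,
      0 ≤ ρ * (u ⬝ᵥ u) * (t * t) + -2 * (u ⬝ᵥ u) * t + ρ * (v ⬝ᵥ v) := by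
    intro t
    have h₁ := (abs_le.mp (h (t • u + v))).2
    have h₂ := (abs_le.mp (h (t • u - v))).1
    simp only [mulVec_add, mulVec_sub, mulVec_smul, dotProduct_add, add_dotProduct,
      dotProduct_sub, sub_dotProduct, dotProduct_smul, smul_dotProduct, smul_eq_mul, hvu] at h₁ h₂
    linarith
  have hdisc := discrim_le_zero hquad
  rw [discrim] at hdisc
  rcases (dotProduct_self_nonneg' u).eq_or_lt with hu | hu
  · rw [← hu]
    exact mul_nonneg (sq_nonneg ρ) (dotProduct_self_nonneg' v)
  · nlinarith

variable [DecidableEq ι]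

lemma vecEnorm_one_sub_smul_mulVec_le {H : Matrix ι ι ℝ} (hH : H.IsSymm) {s S : ℝ} (hs : 0 < s)
    (hsS : s ≤ S) (hlo : (H - s • (1 : Matrix ι ι ℝ)).PosSemidef)
    (hhi : (S • (1 : Matrix ι ι ℝ) - H).PosSemidef) (x : ι → ℝ) :
    vecEnorm ((1 - (2 / (s + S)) • H) *ᵥ x) ≤ (S - s) / (S + s) * vecEnorm x := by
  have hpos : 0 < s + S := by linarith
  set ω := 2 / (s + S) with hω_def
  set ρ := (S - s) / (S + s) with hρ_def
  have hω : 0 ≤ ω := by positivity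
  have hρ_lo : ρ = 1 - ω * s := by rw [hω_def, hρ_def, add_comm S s]; field_simp; ring
  have hρ_hi : ρ = ω * S - 1 := by rw [hω_def, hρ_def, add_comm S s]; field_simp; ring
  refine vecEnorm_le_mul_of_dotProduct_le (by rw [hρ_lo]; nlinarith)
    (IsSymm.dotProduct_mulVec_self_le (isSymm_one.sub (hH.smul ω)) (fun y => ?_) x)
  have h₁ := mul_le_mul_of_nonneg_left (le_dotProduct_mulVec_of_posSemidef_sub_smul_one hlo y) hω
  have h₂ := mul_le_mul_of_nonneg_left (dotProduct_mulVec_le_of_posSemidef_smul_one_sub hhi y) hω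
  rw [sub_mulVec, one_mulVec, smul_mulVec, dotProduct_sub, dotProduct_smul, smul_eq_mul, abs_le]
  constructor
  · rw [hρ_hi]; linarith
  · rw [hρ_lo]; linarith

lemma vecEnorm_le_of_posSemidef_transpose_mul_self_sub {A : Matrix ι ι ℝ} {sig : ℝ}
    (hsig : 0 < sig) (hlo : (Aᵀ * A - sig ^ 2 • (1 : Matrix ι ι ℝ)).PosSemidef) (x : ι → ℝ) :
    vecEnorm x ≤ 1 / sig * vecEnorm (A *ᵥ x) := by
  refine vecEnorm_le_mul_of_dotProduct_le (by positivity) ?_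
  have h := le_dotProduct_mulVec_of_posSemidef_sub_smul_one hlo x
  rw [dotProduct_transpose_mul_self_mulVec] at h
  rw [div_pow, one_pow, one_div_mul_eq_div, le_div_iff₀ (by positivity)]
  linarith

end Contraction

section Richardson

variable {ι : Type*} [Fintype ι]

def richardson (H : Matrix ι ι ℝ) (ω : ℝ) (w : ι → ℝ) : ℕ → ι → ℝ
  | 0 => 0
  | t + 1 => richardson H ω w t + ω • (w - H *ᵥ richardson H ω w t)

variable [DecidableEq ι] {H : Matrix ι ι ℝ} {ω : ℝ} {w y : ι → ℝ}

lemma sub_richardson_succ (hy : H *ᵥ y = w) (t : ℕ) :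
    y - richardson H ω w (t + 1) = (1 - ω • H) *ᵥ (y - richardson H ω w t) := by
  rw [sub_mulVec, smul_mulVec, one_mulVec, mulVec_sub, hy, richardson]
  module

lemma vecEnorm_sub_richardson_le (hy : H *ᵥ y = w) {ρ : ℝ} (hρ : 0 ≤ ρ)
    (hcontr : ∀ x, vecEnorm ((1 - ω • H) *ᵥ x) ≤ ρ * vecEnorm x) (t : ℕ) :
    vecEnorm (y - richardson H ω w t) ≤ ρ ^ t * vecEnorm y := by
  induction t with
  | zero => simp [richardson]
  | succ t ih =>
    calc vecEnorm (y - richardson H ω w (t + 1))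
        = vecEnorm ((1 - ω • H) *ᵥ (y - richardson H ω w t)) := by rw [sub_richardson_succ hy]
      _ ≤ ρ * vecEnorm (y - richardson H ω w t) := hcontr _
      _ ≤ ρ * (ρ ^ t * vecEnorm y) := mul_le_mul_of_nonneg_left ih hρ
      _ = ρ ^ (t + 1) * vecEnorm y := by ring

end Richardson

section Stages

variable {α β : Type*} [Fintype α] [DecidableEq α]

def stagePart (j : α) (v : α × β → ℝ) : α × β → ℝ := fun p => if p.1 = j then v p else 0

lemma sum_stagePart (v : α × β → ℝ) : ∑ j, stagePart j v = v := by
  ext p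
  simp [stagePart, Finset.sum_apply]

lemma vecEnorm_stagePart [Fintype β] (j : α) (v : α × β → ℝ) :
    vecEnorm (stagePart j v) = vecEnorm (fun b => v (j, b)) := by
  rw [← sq_eq_sq₀ (vecEnorm_nonneg _) (vecEnorm_nonneg _), vecEnorm_sq, vecEnorm_sq,
    dotProduct, dotProduct, Fintype.sum_prod_type]
  simp [stagePart, ite_mul, mul_ite]

end Stages

section BlockBand

variable {N : ℕ} {β : Type*}

def stagesNear (j : Fin N) (r : ℕ) : Submodule ℝ (Fin N × β → ℝ) :=
  Submodule.pi {p | r < ((p.1 : ℤ) - j).natAbs} fun _ => ⊥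

lemma mem_stagesNear {j : Fin N} {r : ℕ} {v : Fin N × β → ℝ} :
    v ∈ stagesNear j r ↔ ∀ (k : Fin N) b, r < ((k : ℤ) - j).natAbs → v (k, b) = 0 := by
  simp [stagesNear, Submodule.mem_pi]

lemma stagesNear_mono {j : Fin N} {r r' : ℕ} (h : r ≤ r') :
    (stagesNear j r : Submodule ℝ (Fin N × β → ℝ)) ≤ stagesNear j r' := fun _ hv =>
  mem_stagesNear.mpr fun k b hk => mem_stagesNear.mp hv k b (by omega)

lemma stagePart_mem_stagesNear (j : Fin N) (v : Fin N × β → ℝ) :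
    stagePart j v ∈ stagesNear j 0 :=
  mem_stagesNear.mpr fun k b hk => if_neg fun h => by subst h; simp at hk

def IsBlockTridiagonal (M : Matrix (Fin N × β) (Fin N × β) ℝ) : Prop :=
  ∀ (i k : Fin N) a b, 1 < ((i : ℤ) - k).natAbs → M (i, a) (k, b) = 0

def IsBlockLowerBidiagonal (A : Matrix (Fin N × β) (Fin N × β) ℝ) : Prop :=
  ∀ (i k : Fin N) a b, ¬(0 ≤ (i : ℤ) - k ∧ (i : ℤ) - k ≤ 1) → A (i, a) (k, b) = 0

lemma IsBlockLowerBidiagonal.isBlockTridiagonal_transpose {A : Matrix (Fin N × β) (Fin N × β) ℝ}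
    (hA : IsBlockLowerBidiagonal A) : IsBlockTridiagonal Aᵀ :=
  fun i k a b hik => hA k i b a (by omega)

lemma IsBlockLowerBidiagonal.isBlockTridiagonal_transpose_mul_self [Fintype β]
    {A : Matrix (Fin N × β) (Fin N × β) ℝ} (hA : IsBlockLowerBidiagonal A) :
    IsBlockTridiagonal (Aᵀ * A) := by
  intro i k a b hik
  rw [mul_apply]
  refine Finset.sum_eq_zero fun ⟨m, c⟩ _ => ?_
  by_cases hmi : 0 ≤ (m : ℤ) - i ∧ (m : ℤ) - i ≤ 1
  · rw [hA m k c b (by omega), mul_zero]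
  · rw [transpose_apply, hA m i c a hmi, zero_mul]

lemma IsBlockTridiagonal.mulVec_mem_stagesNear [Fintype β] {M : Matrix (Fin N × β) (Fin N × β) ℝ}
    (hM : IsBlockTridiagonal M) {j : Fin N} {r : ℕ} {v : Fin N × β → ℝ}
    (hv : v ∈ stagesNear j r) : M *ᵥ v ∈ stagesNear j (r + 1) := by
  refine mem_stagesNear.mpr fun k b hk => Finset.sum_eq_zero fun ⟨l, c⟩ _ => ?_
  by_cases hl : ((l : ℤ) - j).natAbs ≤ r
  · simp only [hM k l b c (by omega), zero_mul]
  · simp only [mem_stagesNear.mp hv l c (by omega), mul_zero]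

lemma richardson_mem_stagesNear [Fintype β] {H : Matrix (Fin N × β) (Fin N × β) ℝ}
    (hH : IsBlockTridiagonal H) {ω : ℝ} {j : Fin N} {w : Fin N × β → ℝ}
    (hw : w ∈ stagesNear j 1) (t : ℕ) : richardson H ω w t ∈ stagesNear j t := by
  induction t with
  | zero => exact zero_mem _
  | succ t ih =>
    refine add_mem (stagesNear_mono t.le_succ ih) (Submodule.smul_mem _ _ (sub_mem ?_ ?_))
    · exact stagesNear_mono (by omega) hw
    · exact hH.mulVec_mem_stagesNear ih

end BlockBand

section InverseDecay

variable {N : ℕ} {β : Type*} [Fintype β] [DecidableEq β]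

/-- The stage-`i` part of `A⁻¹ δ` for `δ` supported on stage `j` coincides with that of the
error of the `(|i - j| - 1)`-th Richardson iterate for `AᵀA y = Aᵀ δ`, whose own stage `i`
vanishes. -/
lemma vecEnorm_stage_inv_mulVec_le {A : Matrix (Fin N × β) (Fin N × β) ℝ} {sig Sig : ℝ}
    (hinv : IsUnit A) (hsig : 0 < sig) (hle : sig ≤ Sig)
    (hlo : (Aᵀ * A - sig ^ 2 • (1 : Matrix (Fin N × β) (Fin N × β) ℝ)).PosSemidef)
    (hhi : (Sig ^ 2 • (1 : Matrix (Fin N × β) (Fin N × β) ℝ) - Aᵀ * A).PosSemidef)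
    (hA : IsBlockLowerBidiagonal A) {j : Fin N} {δ : Fin N × β → ℝ} (hδ : δ ∈ stagesNear j 0)
    (i : Fin N) :
    vecEnorm (fun b => (A⁻¹ *ᵥ δ) (i, b)) ≤
      Sig / sig ^ 2 * ((Sig ^ 2 - sig ^ 2) / (Sig ^ 2 + sig ^ 2)) ^ (((i : ℤ) - j).natAbs - 1) *
        vecEnorm δ := by
  set y := A⁻¹ *ᵥ δ
  set t := ((i : ℤ) - j).natAbs - 1
  set iterate := richardson (Aᵀ * A) (2 / (sig ^ 2 + Sig ^ 2)) (Aᵀ *ᵥ δ) t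
  set ρ := (Sig ^ 2 - sig ^ 2) / (Sig ^ 2 + sig ^ 2)
  have hAy : A *ᵥ y = δ := by
    rw [mulVec_mulVec, mul_nonsing_inv _ ((isUnit_iff_isUnit_det A).mp hinv), one_mulVec]
  have hHy : (Aᵀ * A) *ᵥ y = Aᵀ *ᵥ δ := by rw [← mulVec_mulVec, hAy]
  have hiterate : ∀ b, iterate (i, b) = 0 := by
    intro b
    rcases Nat.eq_zero_or_pos ((i : ℤ) - j).natAbs with hij | hij
    · simp only [iterate, t, hij, Nat.zero_sub]
      rfl
    · exact mem_stagesNear.mp (richardson_mem_stagesNear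
        hA.isBlockTridiagonal_transpose_mul_self
        (hA.isBlockTridiagonal_transpose.mulVec_mem_stagesNear hδ) t) i b (by omega)
  have hsq : sig ^ 2 ≤ Sig ^ 2 := pow_le_pow_left₀ hsig.le hle 2
  have hρ : 0 ≤ ρ := div_nonneg (by linarith) (by positivity)
  calc vecEnorm (fun b => y (i, b))
      = vecEnorm (fun b => (y - iterate) (i, b)) := by simp [hiterate]
    _ ≤ vecEnorm (y - iterate) := vecEnorm_stage_le _ i
    _ ≤ ρ ^ t * vecEnorm y :=
      vecEnorm_sub_richardson_le hHy hρ (vecEnorm_one_sub_smul_mulVec_le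
        (isSymm_transpose_mul_self A) (by positivity) hsq hlo hhi) t
    _ ≤ ρ ^ t * (Sig / sig ^ 2 * vecEnorm δ) := by
      refine mul_le_mul_of_nonneg_left ?_ (pow_nonneg hρ t)
      have hy := vecEnorm_le_of_posSemidef_transpose_mul_self_sub hsig hlo y
      rw [hAy] at hy
      refine hy.trans (mul_le_mul_of_nonneg_right ?_ (vecEnorm_nonneg δ))
      rw [div_le_div_iff₀ hsig (by positivity)]
      nlinarith
    _ = _ := by ring

end InverseDecay

theorem stmt_8 {N n : ℕ} (A : Matrix (Fin N × Fin n) (Fin N × Fin n) ℝ) (sig Sig : ℝ)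
    (hinv : IsUnit A) (hsig : 0 < sig) (hle : sig ≤ Sig)
    (hlo : (Aᵀ * A - sig ^ 2 • (1 : Matrix (Fin N × Fin n) (Fin N × Fin n) ℝ)).PosSemidef)
    (hhi : (Sig ^ 2 • (1 : Matrix (Fin N × Fin n) (Fin N × Fin n) ℝ) - Aᵀ * A).PosSemidef)
    (hband : ∀ (i j : Fin N) (a b : Fin n),
      ¬(0 ≤ (i : ℤ) - (j : ℤ) ∧ (i : ℤ) - (j : ℤ) ≤ 1) → A (i, a) (j, b) = 0)
    (d d' : Fin N × Fin n → ℝ) :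
    ∀ i : Fin N,
      vecEnorm (fun a : Fin n => A⁻¹.mulVec d (i, a) - A⁻¹.mulVec d' (i, a)) ≤
        ∑ j : Fin N,
          (Sig / sig ^ 2) *
              ((Sig ^ 2 - sig ^ 2) / (Sig ^ 2 + sig ^ 2)) ^ (((i : ℤ) - (j : ℤ)).natAbs - 1) *
            vecEnorm (fun a : Fin n => d (j, a) - d' (j, a)) := by
  intro i
  have hsplit : A⁻¹ *ᵥ d - A⁻¹ *ᵥ d' = ∑ j, A⁻¹ *ᵥ stagePart j (d - d') := by
    rw [← mulVec_sub, ← mulVec_sum, sum_stagePart]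
  calc vecEnorm (fun a => (A⁻¹ *ᵥ d) (i, a) - (A⁻¹ *ᵥ d') (i, a))
      = vecEnorm (∑ j, fun a => (A⁻¹ *ᵥ stagePart j (d - d')) (i, a)) := by
        congr 1
        ext a
        rw [← Pi.sub_apply, hsplit, Finset.sum_apply, Finset.sum_apply]
    _ ≤ ∑ j, vecEnorm (fun a => (A⁻¹ *ᵥ stagePart j (d - d')) (i, a)) := vecEnorm_sum_le _ _
    _ ≤ _ := Finset.sum_le_sum fun j _ => by
      simpa only [vecEnorm_stagePart, Pi.sub_apply] using
        vecEnorm_stage_inv_mulVec_le hinv hsig hle hlo hhi hband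
          (stagePart_mem_stagesNear j (d - d')) i
end

section
/- Consistency of coarsening: Suppose (z°, λ°) satisfies the KKT conditions of the LP min pᵀz s.t. Gz ≥ d (dual feasibility p = Gᵀλ°, λ° ≥ 0; primal feasibility Gz° ≥ d; complementarity λ°ᵢ(Gz° − d)ᵢ = 0 for all i). Let T, U be matrices with U entrywise-nonnegative, and define p̃ := Tᵀ(p − Gᵀλ°), d̃ := Uᵀ(d − Gz°), G̃ := UᵀGT. Then (z̃, λ̃) = (0, 0) satisfies the KKT conditions of the coarse LP min p̃ᵀz̃ s.t. G̃z̃ ≥ d̃, and hence z̃ = 0 is an optimal solution of the coarse LP. -/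
open Matrix

theorem stmt_13 {M K M' K' : ℕ} (G : Matrix (Fin M) (Fin K) ℝ)
    (p : Fin K → ℝ) (d : Fin M → ℝ) (zo : Fin K → ℝ) (lo : Fin M → ℝ)
    (T : Matrix (Fin K) (Fin K') ℝ) (U : Matrix (Fin M) (Fin M') ℝ)
    (hU : ∀ i j, 0 ≤ U i j)
    -- KKT conditions of the original LP at (zo, lo)
    (hstat : p = Gᵀ.mulVec lo)
    (hdual : ∀ i, 0 ≤ lo i)
    (hprim : ∀ i, G.mulVec zo i ≥ d i)
    (hcomp : ∀ i, lo i * (G.mulVec zo i - d i) = 0) :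
    -- KKT conditions of the coarse LP at (0, 0), and optimality of z̃ = 0
    (Tᵀ.mulVec (p - Gᵀ.mulVec lo) - (Uᵀ * G * T)ᵀ.mulVec (0 : Fin M' → ℝ) = 0) ∧
    (∀ j, (Uᵀ * G * T).mulVec (0 : Fin K' → ℝ) j ≥ Uᵀ.mulVec (d - G.mulVec zo) j) ∧
    (∀ j, (0 : ℝ) ≤ (0 : Fin M' → ℝ) j) ∧
    (∀ j, (0 : Fin M' → ℝ) j *
      ((Uᵀ * G * T).mulVec (0 : Fin K' → ℝ) j - Uᵀ.mulVec (d - G.mulVec zo) j) = 0) ∧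
    (∀ zt : Fin K' → ℝ, (∀ j, (Uᵀ * G * T).mulVec zt j ≥ Uᵀ.mulVec (d - G.mulVec zo) j) →
      Tᵀ.mulVec (p - Gᵀ.mulVec lo) ⬝ᵥ (0 : Fin K' → ℝ) ≤
        Tᵀ.mulVec (p - Gᵀ.mulVec lo) ⬝ᵥ zt) := by
  have hzero : p - Gᵀ.mulVec lo = 0 := by rw [hstat]; simp
  refine ⟨by simp [hzero], ?_, fun j => le_refl 0, fun j => by simp, ?_⟩
  · intro j
    simp only [mulVec_zero, Pi.zero_apply, ge_iff_le]
    rw [mulVec, dotProduct]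
    apply Finset.sum_nonpos
    intro i _
    have : (d - G.mulVec zo) i ≤ 0 := by
      simpa using sub_nonpos.mpr (hprim i)
    exact mul_nonpos_of_nonneg_of_nonpos (hU i j) this
  · intro zt _
    simp [hzero]
end
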